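/- arXiv:1402.0344 — 6 statements merged into one kernel-verified Lean document; each statement's English description precedes it below -/
import Mathlib

section
/- A discriminant D (a non-square integer ≡ 0 or 1 mod 4) is fundamental if and only if every integral binary quadratic form of discriminant D is primitive. -/
/-- An integral binary quadratic form ax² + bxy + cy². -/
structure BQF where
  a : ℤ
  b : ℤ
  c : ℤ

namespace BQF

/-- Value of the form at (x, y). -/
def eval (q : BQF) (x y : ℤ) : ℤ := q.a * x ^ 2 + q.b * x * y + q.c * y ^ 2

/-- Discriminant b² - 4ac. -/
def disc (q : BQF) : ℤ := q.b ^ 2 - 4 * q.a * q.c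

/-- A form is primitive if gcd(a, b, c) = 1. -/
def IsPrimitive (q : BQF) : Prop := Int.gcd (Int.gcd q.a q.b) q.c = 1

/-- Right action: (q·M)(x,y) = q(px + ry, sx + ty) for M = [[p,r],[s,t]]. -/
def act (q : BQF) (M : Matrix (Fin 2) (Fin 2) ℤ) : BQF :=
  ⟨q.eval (M 0 0) (M 1 0),
   q.eval (M 0 0 + M 0 1) (M 1 0 + M 1 1) - q.eval (M 0 0) (M 1 0) - q.eval (M 0 1) (M 1 1),
   q.eval (M 0 1) (M 1 1)⟩

/-- Proper equivalence: equivalence under the SL₂(ℤ) action. -/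
def ProperEquiv (q q' : BQF) : Prop :=
  ∃ U : Matrix.SpecialLinearGroup (Fin 2) ℤ, q.act U.1 = q'

end BQF

/-- R_g = [[f,g],[0,1]] for g < f, and R_f = [[1,0],[0,f]] when g = f. -/
def Rmat (f g : ℤ) : Matrix (Fin 2) (Fin 2) ℤ :=
  if g = f then !![1, 0; 0, f] else !![f, g; 0, 1]

/-- A discriminant: a non-square integer congruent to 0 or 1 mod 4. -/
def IsDiscriminant (D : ℤ) : Prop := ¬ IsSquare D ∧ (D % 4 = 0 ∨ D % 4 = 1)

/-- A fundamental discriminant. -/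
def IsFundamental (D : ℤ) : Prop :=
  (D % 4 = 1 ∧ Squarefree D) ∨
  (D % 4 = 0 ∧ Squarefree (D / 4) ∧ (D / 4 % 4 = 2 ∨ D / 4 % 4 = 3))

/-!
A form whose coefficients share a non-unit factor `f` is `f` times a form, so its discriminant
is `f² d` with `d` the discriminant of that form, hence `d ≡ 0, 1 mod 4`; conversely, for any such
factorization `D = f² d`, `f` times the principal form of discriminant `d` is an imprimitive form
of discriminant `D`. So every form of discriminant `D` is primitive iff `D` admits no
factorization `f² d` with `f` a non-unit and `d ≡ 0, 1 mod 4`, and for `D ≡ 0, 1 mod 4` this is a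
reformulation of fundamentality.
-/

namespace Int

lemma sq_mul_emod_four_of_even {x : ℤ} (hx : Even x) (e : ℤ) : x ^ 2 * e % 4 = 0 := by
  obtain ⟨k, rfl⟩ := hx
  rw [show (k + k) ^ 2 * e = 4 * (k ^ 2 * e) by ring]
  exact Int.mul_emod_right 4 _

lemma sq_mul_emod_four_of_odd {x : ℤ} (hx : Odd x) (e : ℤ) : x ^ 2 * e % 4 = e % 4 := by
  rw [Int.mul_emod, Int.sq_mod_four_eq_one_of_odd hx, one_mul, Int.emod_emod_of_dvd _ dvd_rfl]

end Int

lemma IsFundamental.isUnit_of_eq_sq_mul {D f d : ℤ} (hD : IsFundamental D) (hDf : D = f ^ 2 * d)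
    (hd : d % 4 = 0 ∨ d % 4 = 1) : IsUnit f := by
  subst hDf
  rcases hD with ⟨-, hsf⟩ | ⟨hD0, hsf, hm⟩
  · exact hsf f ⟨d, by ring⟩
  rcases Int.even_or_odd f with ⟨g, rfl⟩ | hf
  · exfalso
    rw [show (g + g) ^ 2 * d / 4 = g ^ 2 * d by
      rw [show (g + g) ^ 2 * d = 4 * (g ^ 2 * d) by ring]; omega] at hsf hm
    rw [Int.isUnit_sq (hsf g ⟨d, by ring⟩), one_mul] at hm
    omega
  · obtain ⟨e, rfl⟩ : 4 ∣ d := by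
      have := Int.sq_mul_emod_four_of_odd hf d; omega
    rw [show f ^ 2 * (4 * e) / 4 = f * f * e by
      rw [show f ^ 2 * (4 * e) = 4 * (f * f * e) by ring]; omega] at hsf
    exact hsf f (dvd_mul_right _ _)

lemma isFundamental_of_forall_eq_sq_mul {D : ℤ} (hD : D % 4 = 0 ∨ D % 4 = 1)
    (h : ∀ f d : ℤ, D = f ^ 2 * d → (d % 4 = 0 ∨ d % 4 = 1) → IsUnit f) : IsFundamental D := by
  rcases hD with hD0 | hD1
  · obtain ⟨m, rfl⟩ : 4 ∣ D := Int.dvd_of_emod_eq_zero hD0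
    rw [IsFundamental, show 4 * m / 4 = m by omega]
    have hm : m % 4 = 2 ∨ m % 4 = 3 := by
      by_contra hm
      have := Int.isUnit_iff.mp (h 2 m (by ring) (by omega))
      omega
    exact Or.inr ⟨hD0, fun x ⟨e, he⟩ ↦ h x (4 * e) (by rw [he]; ring) (by omega), hm⟩
  · refine Or.inl ⟨hD1, fun x ⟨e, he⟩ ↦ h x e (by rw [he]; ring) ?_⟩
    rw [he, ← pow_two] at hD1
    rcases Int.even_or_odd x with hx | hx
    · rw [Int.sq_mul_emod_four_of_even hx] at hD1; omega
    · rw [Int.sq_mul_emod_four_of_odd hx] at hD1; omega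

lemma isFundamental_iff_forall_eq_sq_mul {D : ℤ} (hD : D % 4 = 0 ∨ D % 4 = 1) :
    IsFundamental D ↔
      ∀ f d : ℤ, D = f ^ 2 * d → (d % 4 = 0 ∨ d % 4 = 1) → IsUnit f :=
  ⟨fun hfund _ _ ↦ hfund.isUnit_of_eq_sq_mul, isFundamental_of_forall_eq_sq_mul hD⟩

namespace BQF

lemma disc_emod_four (q : BQF) : q.disc % 4 = 0 ∨ q.disc % 4 = 1 := by
  rcases Int.even_or_odd q.b with hb | hb
  · have := Int.sq_mul_emod_four_of_even hb 1
    rw [mul_one] at this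
    rw [disc, mul_assoc]; omega
  · have := Int.sq_mod_four_eq_one_of_odd hb
    rw [disc, mul_assoc]; omega

lemma isPrimitive_iff {q : BQF} :
    q.IsPrimitive ↔ ∀ f : ℤ, f ∣ q.a → f ∣ q.b → f ∣ q.c → IsUnit f := by
  constructor
  · intro hq f ha hb hc
    have := Int.dvd_coe_gcd (Int.dvd_coe_gcd ha hb) hc
    rw [hq, Nat.cast_one] at this
    exact isUnit_of_dvd_one this
  · intro h
    have hg := h _ ((Int.gcd_dvd_left _ _).trans (Int.gcd_dvd_left _ _))
      ((Int.gcd_dvd_left _ _).trans (Int.gcd_dvd_right _ _)) (Int.gcd_dvd_right _ _)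
    exact Nat.isUnit_iff.mp (Int.ofNat_isUnit.mp hg)

def scale (f : ℤ) (q : BQF) : BQF := ⟨f * q.a, f * q.b, f * q.c⟩

lemma disc_scale (f : ℤ) (q : BQF) : (q.scale f).disc = f ^ 2 * q.disc := by
  unfold disc scale; ring

lemma not_isPrimitive_scale {f : ℤ} (hf : ¬IsUnit f) (q : BQF) : ¬(q.scale f).IsPrimitive :=
  fun hq ↦ hf (isPrimitive_iff.mp hq f (dvd_mul_right _ _) (dvd_mul_right _ _) (dvd_mul_right _ _))

def principal (d : ℤ) : BQF := ⟨1, d % 2, (d % 2 - d) / 4⟩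

lemma disc_principal {d : ℤ} (hd : d % 4 = 0 ∨ d % 4 = 1) : (principal d).disc = d := by
  rw [disc, principal, mul_one]
  dsimp only
  rcases hd with hd | hd
  · rw [show d % 2 = 0 by omega]; omega
  · rw [show d % 2 = 1 by omega]; omega

lemma exists_not_isPrimitive_disc_eq_iff {D : ℤ} :
    (∃ q : BQF, q.disc = D ∧ ¬q.IsPrimitive) ↔
      ∃ f d : ℤ, D = f ^ 2 * d ∧ (d % 4 = 0 ∨ d % 4 = 1) ∧ ¬IsUnit f := by
  constructor
  · rintro ⟨q, rfl, hq⟩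
    obtain ⟨f, ⟨a, ha⟩, ⟨b, hb⟩, ⟨c, hc⟩, hf⟩ := by simpa [isPrimitive_iff] using hq
    have hq' : q = scale f ⟨a, b, c⟩ := by
      cases q; simp_all [scale]
    exact ⟨f, _, hq' ▸ disc_scale f _, disc_emod_four _, hf⟩
  · rintro ⟨f, d, rfl, hd, hf⟩
    exact ⟨(principal d).scale f, by rw [disc_scale, disc_principal hd],
      not_isPrimitive_scale hf _⟩

end BQF

theorem stmt1 (D : ℤ) (hD : IsDiscriminant D) :
    IsFundamental D ↔ ∀ q : BQF, q.disc = D → q.IsPrimitive := by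
  rw [isFundamental_iff_forall_eq_sq_mul hD.2, ← not_iff_not]
  simp only [not_forall, exists_prop]
  exact BQF.exists_not_isPrimitive_disc_eq_iff.symm
end

section
/- Let q be a primitive integral binary quadratic form and f a nonzero integer. Then q is properly equivalent (under the SL₂(ℤ) action) to a form q' = ax² + bxy + cy² with gcd(a, f) = 1. -/
/-!
Since every coprime pair (x, y) is the first column of a matrix in SL₂(ℤ), q is properly
equivalent to a form whose first coefficient is q(x, y); so it suffices to find coprime x, y
with q(x, y) prime to f. This is arranged one prime p ∣ f at a time: if p ∤ a, take p ∣ y and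
p ∤ x; if p ∣ a but p ∤ c, take p ∣ x and p ∤ y; if p divides a and c, then p ∤ b by
primitivity and p ∤ xy suffices. Products of the primes of f of the first two kinds give x and y,
coprime because the two kinds are disjoint.
-/

theorem Nat.exists_dvd_forall_prime_dvd_iff {F : ℕ} (hF : F ≠ 0) (P : ℕ → Prop) :
    ∃ n : ℕ, n ∣ F ∧ ∀ p : ℕ, p.Prime → p ∣ F → (p ∣ n ↔ P p) := by
  classical
  set S := F.primeFactors.filter P
  have hS : ∀ p ∈ S, p.Prime := fun p hp =>
    Nat.prime_of_mem_primeFactors (Finset.mem_filter.mp hp).1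
  refine ⟨∏ p ∈ S, p, (Finset.prod_dvd_prod_of_subset _ _ _ (Finset.filter_subset _ _)).trans
    (Nat.prod_primeFactors_dvd F), fun p hp hpF => ?_⟩
  have hprod : ∏ p ∈ S, p ≠ 0 := Finset.prod_ne_zero_iff.mpr fun p hpS => (hS p hpS).ne_zero
  calc p ∣ ∏ p ∈ S, p ↔ p ∈ (∏ p ∈ S, p).primeFactors := by
        rw [Nat.mem_primeFactors_of_ne_zero hprod, and_iff_right hp]
    _ ↔ p ∈ S := by rw [Nat.primeFactors_prod hS]
    _ ↔ P p := by
      rw [Finset.mem_filter, Nat.mem_primeFactors_of_ne_zero hF, and_iff_right ⟨hp, hpF⟩]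

theorem Int.exists_dvd_forall_prime_dvd_iff {f : ℤ} (hf : f ≠ 0) (P : ℕ → Prop) :
    ∃ n : ℤ, n ∣ f ∧ ∀ p : ℕ, p.Prime → (p : ℤ) ∣ f → ((p : ℤ) ∣ n ↔ P p) := by
  obtain ⟨n, hnf, hn⟩ := Nat.exists_dvd_forall_prime_dvd_iff (Int.natAbs_ne_zero.mpr hf) P
  refine ⟨n, Int.natCast_dvd.mpr hnf, fun p hp hpf => ?_⟩
  rw [Int.natCast_dvd_natCast]
  exact hn p hp (Int.natCast_dvd.mp hpf)

theorem Int.gcd_eq_one_of_forall_prime {a b : ℤ}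
    (h : ∀ p : ℕ, p.Prime → (p : ℤ) ∣ a → ¬ (p : ℤ) ∣ b) : Int.gcd a b = 1 :=
  Nat.coprime_of_dvd fun p hp ha hb => h p hp (Int.natCast_dvd.mpr ha) (Int.natCast_dvd.mpr hb)

namespace BQF

theorem exists_properEquiv_a_eq_eval (q : BQF) {x y : ℤ} (hxy : IsCoprime x y) :
    ∃ q' : BQF, q.ProperEquiv q' ∧ q'.a = q.eval x y := by
  obtain ⟨u, v, huv⟩ := hxy
  have hdet : (!![x, -v; y, u] : Matrix (Fin 2) (Fin 2) ℤ).det = 1 := by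
    rw [Matrix.det_fin_two_of]; linear_combination huv
  exact ⟨_, ⟨⟨_, hdet⟩, rfl⟩, rfl⟩

theorem IsPrimitive.isUnit_of_dvd {q : BQF} (hq : q.IsPrimitive) {k : ℤ} (ha : k ∣ q.a)
    (hb : k ∣ q.b) (hc : k ∣ q.c) : IsUnit k := by
  have hk := Int.dvd_coe_gcd (Int.dvd_coe_gcd ha hb) hc
  rw [hq, Nat.cast_one] at hk
  exact isUnit_of_dvd_one hk

variable (q : BQF) {p x y : ℤ}

theorem not_dvd_eval_of_not_dvd_a (hp : Prime p) (ha : ¬ p ∣ q.a) (hx : ¬ p ∣ x) (hy : p ∣ y) :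
    ¬ p ∣ q.eval x y := by
  have hsplit : q.eval x y = q.a * x ^ 2 + y * (q.b * x + q.c * y) := by unfold eval; ring
  rw [hsplit, dvd_add_left (dvd_mul_of_dvd_left hy _)]
  exact hp.not_dvd_mul ha (mt hp.dvd_of_dvd_pow hx)

theorem not_dvd_eval_of_not_dvd_c (hp : Prime p) (hc : ¬ p ∣ q.c) (hx : p ∣ x) (hy : ¬ p ∣ y) :
    ¬ p ∣ q.eval x y := by
  have hsplit : q.eval x y = q.c * y ^ 2 + x * (q.a * x + q.b * y) := by unfold eval; ring
  rw [hsplit, dvd_add_left (dvd_mul_of_dvd_left hx _)]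
  exact hp.not_dvd_mul hc (mt hp.dvd_of_dvd_pow hy)

variable {q}

theorem IsPrimitive.not_dvd_eval_of_dvd_a_of_dvd_c (hq : q.IsPrimitive) (hp : Prime p)
    (ha : p ∣ q.a) (hc : p ∣ q.c) (hx : ¬ p ∣ x) (hy : ¬ p ∣ y) : ¬ p ∣ q.eval x y := by
  have hsplit : q.eval x y = q.b * x * y + (q.a * x ^ 2 + q.c * y ^ 2) := by unfold eval; ring
  rw [hsplit, dvd_add_left (dvd_add (ha.mul_right _) (hc.mul_right _))]
  exact hp.not_dvd_mul (hp.not_dvd_mul (fun hb => hp.not_isUnit (hq.isUnit_of_dvd ha hb hc)) hx) hy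

theorem IsPrimitive.exists_isCoprime_gcd_eval_eq_one (hq : q.IsPrimitive) {f : ℤ} (hf : f ≠ 0) :
    ∃ x y : ℤ, IsCoprime x y ∧ Int.gcd (q.eval x y) f = 1 := by
  obtain ⟨x, hxf, hx⟩ :=
    Int.exists_dvd_forall_prime_dvd_iff hf fun p => (p : ℤ) ∣ q.a ∧ ¬ (p : ℤ) ∣ q.c
  obtain ⟨y, hyf, hy⟩ := Int.exists_dvd_forall_prime_dvd_iff hf fun p => ¬ (p : ℤ) ∣ q.a
  refine ⟨x, y, Int.isCoprime_iff_gcd_eq_one.mpr <| Int.gcd_eq_one_of_forall_prime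
    fun p hp hpx hpy => ?_, Int.gcd_eq_one_of_forall_prime fun p hp hpe hpf => ?_⟩
  · have hpf := hpx.trans hxf
    exact (hy p hp hpf).mp hpy ((hx p hp hpf).mp hpx).1
  · have hp' := Nat.prime_iff_prime_int.mp hp
    have hxp := hx p hp hpf
    have hyp := hy p hp hpf
    by_cases ha : (p : ℤ) ∣ q.a
    · by_cases hc : (p : ℤ) ∣ q.c
      · exact hq.not_dvd_eval_of_dvd_a_of_dvd_c hp' ha hc (fun h => (hxp.mp h).2 hc)
          (fun h => hyp.mp h ha) hpe
      · exact q.not_dvd_eval_of_not_dvd_c hp' hc (hxp.mpr ⟨ha, hc⟩) (fun h => hyp.mp h ha) hpe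
    · exact q.not_dvd_eval_of_not_dvd_a hp' ha (fun h => ha (hxp.mp h).1) (hyp.mpr ha) hpe

end BQF

theorem stmt3 (q : BQF) (hq : q.IsPrimitive) (f : ℤ) (hf : f ≠ 0) :
    ∃ q' : BQF, BQF.ProperEquiv q q' ∧ Int.gcd q'.a f = 1 := by
  obtain ⟨x, y, hxy, hgcd⟩ := hq.exists_isCoprime_gcd_eval_eq_one hf
  obtain ⟨q', hqq', ha⟩ := q.exists_properEquiv_a_eq_eval hxy
  exact ⟨q', hqq', ha ▸ hgcd⟩
end

section
/- Let Q = Ax² + Bxy + Cy² be an integral binary quadratic form of discriminant Df², and suppose gcd(2A, f) = 1. Then Q is properly equivalent to a form Q' = A'x² + B'xy + C'y² with A' = A, f ∣ B', and f² ∣ C'. -/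
theorem stmt8 (Q : BQF) (D f : ℤ) (hdisc : Q.disc = D * f ^ 2)
    (h : Int.gcd (2 * Q.a) f = 1) :
    ∃ Q' : BQF, BQF.ProperEquiv Q Q' ∧ Q'.a = Q.a ∧ f ∣ Q'.b ∧ f ^ 2 ∣ Q'.c := by
  have hco : IsCoprime (2 * Q.a) f := Int.isCoprime_iff_gcd_eq_one.mpr h
  obtain ⟨u, v, huv⟩ := hco.pow_right (n := 2)
  set r : ℤ := -Q.b * u with hr
  have hdet : (!![1, r; 0, 1] : Matrix (Fin 2) (Fin 2) ℤ).det = 1 := by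
    simp [Matrix.det_fin_two_of]
  have hb2 : f ^ 2 ∣ (2 * Q.a * r + Q.b) := by
    rw [hr]; exact ⟨Q.b * v, by linear_combination -Q.b * huv⟩
  refine ⟨Q.act !![1, r; 0, 1], ⟨⟨!![1, r; 0, 1], hdet⟩, rfl⟩, ?_, ?_, ?_⟩
  · show Q.eval 1 0 = Q.a
    simp [BQF.eval]
  · have hb : (Q.act !![1, r; 0, 1]).b = 2 * Q.a * r + Q.b := by
      show Q.eval (1 + r) (0 + 1) - Q.eval 1 0 - Q.eval r 1 = _
      simp only [BQF.eval]; ring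
    exact dvd_trans (dvd_pow_self f two_ne_zero) (hb ▸ hb2)
  · have hc : (Q.act !![1, r; 0, 1]).c = Q.a * r ^ 2 + Q.b * r + Q.c := by
      show Q.eval r 1 = _
      simp only [BQF.eval]; ring
    have hkey : f ^ 2 ∣ (2 * Q.a) * (2 * (Q.act !![1, r; 0, 1]).c) := by
      have heq : (2 * Q.a) * (2 * (Q.act !![1, r; 0, 1]).c)
          = (2 * Q.a * r + Q.b) ^ 2 - D * f ^ 2 := by
        rw [hc, ← hdisc]; simp only [BQF.disc]; ring
      rw [heq]
      exact dvd_sub (dvd_trans hb2 (dvd_pow_self _ two_ne_zero)) (dvd_mul_left _ _)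
    have h1 : f ^ 2 ∣ 2 * (Q.act !![1, r; 0, 1]).c :=
      (hco.symm.pow_left).dvd_of_dvd_mul_left hkey
    exact ((hco.of_mul_left_left).symm.pow_left).dvd_of_dvd_mul_left h1
end

section
/- Let q = ax² + bxy + cy² be a primitive form of discriminant D, f > 1 an integer, and 0 ≤ g ≤ f. Suppose Q = q · R_g · U for some U ∈ SL₂(ℤ), where R_g = [[f,g],[0,1]] for g < f and R_f = [[1,0],[0,f]]. Then there exist a form q₀ properly equivalent to q and V ∈ SL₂(ℤ) such that Q = q₀ · R_f · V. -/
/-! `R_g = W · R_f · S` with `W = [[g, -1], [1, 0]]` and `S = [[0, 1], [-1, 0]]` in `SL₂(ℤ)`, so the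
action of `R_g` is that of `R_f` up to replacing `q` by the properly equivalent form `q · W`. -/

open Matrix

lemma BQF.act_mul (q : BQF) (M N : Matrix (Fin 2) (Fin 2) ℤ) :
    q.act (M * N) = (q.act M).act N := by
  simp only [BQF.act, BQF.eval, Matrix.mul_apply, Fin.sum_univ_succ, Fin.sum_univ_zero,
    Fin.succ_zero_eq_one, BQF.mk.injEq]
  exact ⟨by ring, by ring, by ring⟩

lemma Rmat_eq_mul_Rmat_self_mul (f g : ℤ) :
    ∃ W S : SpecialLinearGroup (Fin 2) ℤ, Rmat f g = W.1 * Rmat f f * S.1 := by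
  by_cases hg : g = f
  · exact ⟨1, 1, by simp [hg]⟩
  · refine ⟨⟨!![g, -1; 1, 0], by simp [det_fin_two_of]⟩,
      ⟨!![0, 1; -1, 0], by simp [det_fin_two_of]⟩, ?_⟩
    simp [Rmat, hg]

theorem stmt10_general (q : BQF)
    (f g : ℤ)
    (Q : BQF) (U : Matrix.SpecialLinearGroup (Fin 2) ℤ) (hQ : Q = q.act (Rmat f g * U.1)) :
    ∃ q₀ : BQF, ∃ V : Matrix.SpecialLinearGroup (Fin 2) ℤ,
      BQF.ProperEquiv q q₀ ∧ Q = q₀.act (Rmat f f * V.1) := by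
  obtain ⟨W, S, hR⟩ := Rmat_eq_mul_Rmat_self_mul f g
  refine ⟨q.act W.1, S * U, ⟨W, rfl⟩, ?_⟩
  rw [hQ, hR, show (S * U).1 = S.1 * U.1 from rfl, ← BQF.act_mul]
  simp only [Matrix.mul_assoc]

theorem stmt10 (q : BQF) (D : ℤ) (hq : q.IsPrimitive) (hd : q.disc = D)
    (f g : ℤ) (hf : 1 < f) (hg0 : 0 ≤ g) (hgf : g ≤ f)
    (Q : BQF) (U : Matrix.SpecialLinearGroup (Fin 2) ℤ) (hQ : Q = q.act (Rmat f g * U.1)) :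
    ∃ q₀ : BQF, ∃ V : Matrix.SpecialLinearGroup (Fin 2) ℤ,
      BQF.ProperEquiv q q₀ ∧ Q = q₀.act (Rmat f f * V.1) :=
  stmt10_general q f g Q U hQ
end

section
/- Let f be a prime and D a discriminant. Suppose Q₁ and Q₂ are semi-equivalent primitive forms of discriminant Df², and q₁, q₂ are primitive forms of discriminant D with integer matrices M₁, M₂ of determinant f such that Qᵢ = qᵢ·Mᵢ. Then q₁ and q₂ are properly equivalent. -/
/-- Semi-equivalence of forms of discriminant Df². -/
def SemiEquiv (f D : ℤ) (Q₁ Q₂ : BQF) : Prop :=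
  ∃ q₁ q₂ : BQF, ∃ g₁ g₂ : ℤ, ∃ U₁ U₂ : Matrix.SpecialLinearGroup (Fin 2) ℤ,
    q₁.IsPrimitive ∧ q₂.IsPrimitive ∧ q₁.disc = D ∧ q₂.disc = D ∧
    BQF.ProperEquiv q₁ q₂ ∧ 0 ≤ g₁ ∧ g₁ ≤ f ∧ 0 ≤ g₂ ∧ g₂ ≤ f ∧
    Q₁ = q₁.act (Rmat f g₁ * U₁.1) ∧ Q₂ = q₂.act (Rmat f g₂ * U₂.1)

namespace BQF

lemma eval_act (q : BQF) (M : Matrix (Fin 2) (Fin 2) ℤ) (x y : ℤ) :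
    (q.act M).eval x y = q.eval (M 0 0 * x + M 0 1 * y) (M 1 0 * x + M 1 1 * y) := by
  simp only [act, eval]
  ring

lemma act_mul_s15 (q : BQF) (M N : Matrix (Fin 2) (Fin 2) ℤ) :
    q.act (M * N) = (q.act M).act N := by
  simp only [act, Matrix.mul_apply, Fin.sum_univ_two]
  congr 1 <;> simp only [eval] <;> ring

lemma act_one (q : BQF) : q.act 1 = q := by
  obtain ⟨a, b, c⟩ := q
  simp only [act, eval, Matrix.one_apply_eq, Matrix.one_apply_ne, ne_eq, zero_ne_one,
    one_ne_zero, not_false_eq_true, mk.injEq]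
  refine ⟨by ring, by ring, by ring⟩

lemma act_smul (q : BQF) (k : ℤ) (M : Matrix (Fin 2) (Fin 2) ℤ) :
    q.act (k • M) = ⟨k ^ 2 * (q.act M).a, k ^ 2 * (q.act M).b, k ^ 2 * (q.act M).c⟩ := by
  simp only [act, eval, Matrix.smul_apply, smul_eq_mul]
  congr 1 <;> ring

lemma act_smul_cancel {k : ℤ} (hk : k ≠ 0) {q q' : BQF} {M M' : Matrix (Fin 2) (Fin 2) ℤ}
    (h : q.act (k • M) = q'.act (k • M')) : q.act M = q'.act M' := by
  have hk2 : k ^ 2 ≠ 0 := pow_ne_zero 2 hk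
  rw [act_smul, act_smul] at h
  generalize q.act M = Q at h ⊢
  generalize q'.act M' = Q' at h ⊢
  obtain ⟨a, b, c⟩ := Q
  obtain ⟨a', b', c'⟩ := Q'
  simp only [mk.injEq] at h ⊢
  exact ⟨mul_left_cancel₀ hk2 h.1, mul_left_cancel₀ hk2 h.2.1, mul_left_cancel₀ hk2 h.2.2⟩

lemma ProperEquiv.trans {q q' q'' : BQF} (h : ProperEquiv q q') (h' : ProperEquiv q' q'') :
    ProperEquiv q q'' := by
  obtain ⟨U, rfl⟩ := h
  obtain ⟨V, rfl⟩ := h'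
  exact ⟨U * V, by rw [Matrix.SpecialLinearGroup.coe_mul, act_mul_s15]⟩

lemma IsPrimitive.exists_not_dvd_eval {Q : BQF} (hQ : Q.IsPrimitive) {p : ℤ} (hp : ¬IsUnit p) :
    ∃ x y, ¬p ∣ Q.eval x y := by
  by_contra! h
  have ha : p ∣ Q.a := by simpa [eval] using h 1 0
  have hc : p ∣ Q.c := by simpa [eval] using h 0 1
  have hb : p ∣ Q.b := by
    have h11 : p ∣ Q.a + Q.b + Q.c := by simpa [eval] using h 1 1
    rw [show Q.b = Q.a + Q.b + Q.c - Q.a - Q.c by ring]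
    exact (h11.sub ha).sub hc
  have : p ∣ (Int.gcd (Int.gcd Q.a Q.b) Q.c : ℤ) := Int.dvd_coe_gcd (Int.dvd_coe_gcd ha hb) hc
  rw [hQ, Nat.cast_one] at this
  exact hp (isUnit_of_dvd_one this)

/-- For `u ∥ z` modulo `p` one has `q(u) zᵢ² ≡ q(z) uᵢ²`. -/
lemma dvd_eval_or_dvd_of_dvd_cross (q : BQF) {p : ℤ} (hp : Prime p) {u₁ u₂ z₁ z₂ : ℤ}
    (hcross : p ∣ u₁ * z₂ - u₂ * z₁) (hz : p ∣ q.eval z₁ z₂) :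
    p ∣ q.eval u₁ u₂ ∨ (p ∣ z₁ ∧ p ∣ z₂) := by
  have h₁ : p ∣ q.eval u₁ u₂ * z₁ ^ 2 := by
    have : q.eval u₁ u₂ * z₁ ^ 2 = q.eval z₁ z₂ * u₁ ^ 2
        - (u₁ * z₂ - u₂ * z₁) * (q.b * u₁ * z₁ + q.c * (u₂ * z₁ + u₁ * z₂)) := by
      simp only [eval]; ring
    rw [this]
    exact (hz.mul_right _).sub (hcross.mul_right _)
  have h₂ : p ∣ q.eval u₁ u₂ * z₂ ^ 2 := by
    have : q.eval u₁ u₂ * z₂ ^ 2 = q.eval z₁ z₂ * u₂ ^ 2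
        + (u₁ * z₂ - u₂ * z₁) * (q.b * u₂ * z₂ + q.a * (u₁ * z₂ + u₂ * z₁)) := by
      simp only [eval]; ring
    rw [this]
    exact (hz.mul_right _).add (hcross.mul_right _)
  rcases hp.dvd_or_dvd h₁ with hu | hz₁
  · exact .inl hu
  rcases hp.dvd_or_dvd h₂ with hu | hz₂
  · exact .inl hu
  exact .inr ⟨hp.dvd_of_dvd_pow hz₁, hp.dvd_of_dvd_pow hz₂⟩

lemma dvd_of_dvd_eval_image (q : BQF) {p : ℤ} (hp : Prime p) {M : Matrix (Fin 2) (Fin 2) ℤ}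
    (hdet : p ∣ M.det) (hprim : (q.act M).IsPrimitive) {w₁ w₂ : ℤ}
    (hz : p ∣ q.eval (M 0 0 * w₁ + M 0 1 * w₂) (M 1 0 * w₁ + M 1 1 * w₂)) :
    p ∣ M 0 0 * w₁ + M 0 1 * w₂ ∧ p ∣ M 1 0 * w₁ + M 1 1 * w₂ := by
  obtain ⟨x, y, hxy⟩ := hprim.exists_not_dvd_eval hp.not_isUnit
  rw [eval_act] at hxy
  refine (q.dvd_eval_or_dvd_of_dvd_cross hp ?_ hz).resolve_left hxy
  rw [Matrix.det_fin_two] at hdet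
  have : (M 0 0 * x + M 0 1 * y) * (M 1 0 * w₁ + M 1 1 * w₂)
      - (M 1 0 * x + M 1 1 * y) * (M 0 0 * w₁ + M 0 1 * w₂)
      = (M 0 0 * M 1 1 - M 0 1 * M 1 0) * (x * w₂ - y * w₁) := by ring
  rw [this]
  exact hdet.mul_right _

lemma dvd_entries_of_dvd_act_mul (q : BQF) {p : ℤ} (hp : Prime p)
    {M : Matrix (Fin 2) (Fin 2) ℤ} (hdet : p ∣ M.det) (hprim : (q.act M).IsPrimitive)
    (K : Matrix (Fin 2) (Fin 2) ℤ) (ha : p ∣ (q.act (M * K)).a) (hc : p ∣ (q.act (M * K)).c)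
    (i j : Fin 2) : p ∣ (M * K) i j := by
  have hMK : ∀ i j, (M * K) i j = M i 0 * K 0 j + M i 1 * K 1 j := fun i j => by
    simp [Matrix.mul_apply, Fin.sum_univ_two]
  simp only [act, hMK] at ha hc
  rw [hMK]
  have h₀ := q.dvd_of_dvd_eval_image hp hdet hprim ha
  have h₁ := q.dvd_of_dvd_eval_image hp hdet hprim hc
  fin_cases i <;> fin_cases j
  exacts [h₀.1, h₁.1, h₀.2, h₁.2]

theorem properEquiv_of_act_eq_act {p : ℤ} (hp : Prime p) {q q' : BQF}
    {M M' : Matrix (Fin 2) (Fin 2) ℤ} (hM : M.det = p) (hM' : M'.det = p)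
    (hprim : (q.act M).IsPrimitive) (h : q.act M = q'.act M') : ProperEquiv q q' := by
  have hN : q.act (M * M'.adjugate) = q'.act (p • 1) := by
    rw [act_mul_s15, h, ← act_mul_s15, Matrix.mul_adjugate, hM']
  have hdvd_sq : ∀ x : ℤ, p ∣ p ^ 2 * x := fun x => (dvd_pow_self p two_ne_zero).mul_right x
  have hdvd : ∀ i j, p ∣ (M * M'.adjugate) i j :=
    q.dvd_entries_of_dvd_act_mul hp (hM ▸ dvd_rfl) hprim M'.adjugate
      (by rw [hN, act_smul]; exact hdvd_sq _) (by rw [hN, act_smul]; exact hdvd_sq _)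
  obtain ⟨V, hNV⟩ : ∃ V, M * M'.adjugate = p • V :=
    ⟨.of fun i j => (M * M'.adjugate) i j / p, by ext i j; simp [Int.mul_ediv_cancel' (hdvd i j)]⟩
  have hV : V.det = 1 := by
    have := congrArg Matrix.det hNV
    rw [Matrix.det_mul, Matrix.det_adjugate, hM, hM', Matrix.det_smul, Fintype.card_fin,
      show 2 - 1 = 1 from rfl, pow_one] at this
    exact mul_left_cancel₀ (pow_ne_zero 2 hp.ne_zero) (by linear_combination -this)
  refine ⟨⟨V, hV⟩, ?_⟩
  rw [hNV] at hN
  rw [act_smul_cancel hp.ne_zero hN, act_one]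

end BQF

lemma det_Rmat (f g : ℤ) : (Rmat f g).det = f := by
  unfold Rmat
  split_ifs <;> simp [Matrix.det_fin_two_of]

theorem stmt15_general (f : ℕ) (hf : f.Prime) (D : ℤ)
    (Q₁ Q₂ : BQF) (hQ₁ : Q₁.IsPrimitive) (hQ₂ : Q₂.IsPrimitive)
    (hse : SemiEquiv f D Q₁ Q₂)
    (q₁ q₂ : BQF)
    (M₁ M₂ : Matrix (Fin 2) (Fin 2) ℤ) (hM₁ : M₁.det = f) (hM₂ : M₂.det = f)
    (h₁ : Q₁ = q₁.act M₁) (h₂ : Q₂ = q₂.act M₂) :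
    BQF.ProperEquiv q₁ q₂ := by
  obtain ⟨q₁', q₂', g₁, g₂, U₁, U₂, -, -, -, -, hq', -, -, -, -, hE₁, hE₂⟩ := hse
  have hp : Prime (f : ℤ) := Nat.prime_iff_prime_int.mp hf
  have hdet : ∀ (g : ℤ) (U : Matrix.SpecialLinearGroup (Fin 2) ℤ), (Rmat f g * U.1).det = f :=
    fun g U => by rw [Matrix.det_mul, U.2, mul_one, det_Rmat]
  have e₁ : BQF.ProperEquiv q₁ q₁' :=
    BQF.properEquiv_of_act_eq_act hp hM₁ (hdet g₁ U₁) (h₁ ▸ hQ₁) (h₁.symm.trans hE₁)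
  have e₂ : BQF.ProperEquiv q₂' q₂ :=
    BQF.properEquiv_of_act_eq_act hp (hdet g₂ U₂) hM₂ (hE₂ ▸ hQ₂) (hE₂.symm.trans h₂)
  exact (e₁.trans hq').trans e₂

theorem stmt15 (f : ℕ) (hf : f.Prime) (D : ℤ)
    (hD : IsDiscriminant D) (Q₁ Q₂ : BQF) (hQ₁ : Q₁.IsPrimitive) (hQ₂ : Q₂.IsPrimitive)
    (hd₁ : Q₁.disc = D * f ^ 2) (hd₂ : Q₂.disc = D * f ^ 2)
    (hse : SemiEquiv f D Q₁ Q₂)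
    (q₁ q₂ : BQF) (hq₁ : q₁.IsPrimitive) (hq₂ : q₂.IsPrimitive)
    (hqd₁ : q₁.disc = D) (hqd₂ : q₂.disc = D)
    (M₁ M₂ : Matrix (Fin 2) (Fin 2) ℤ) (hM₁ : M₁.det = f) (hM₂ : M₂.det = f)
    (h₁ : Q₁ = q₁.act M₁) (h₂ : Q₂ = q₂.act M₂) :
    BQF.ProperEquiv q₁ q₂ :=
  stmt15_general f hf D Q₁ Q₂ hQ₁ hQ₂ hse q₁ q₂ M₁ M₂ hM₁ hM₂ h₁ h₂
end

section
/- Let f be prime, q = ax² + bxy + cy² primitive of discriminant D with gcd(a, f) = 1. For 0 ≤ g ≤ f, the form Q_g = q·R_g is primitive if and only if g = f or f ∤ q(g,1). The number of such g equals f - (D/f), where (D/f) is the Kronecker symbol. -/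
/-- The Kronecker symbol (D/f) for f prime. -/
def kronSym (D : ℤ) (f : ℕ) : ℤ :=
  if f = 2 then (if D % 2 = 0 then 0 else if D % 8 = 1 ∨ D % 8 = 7 then 1 else -1)
  else jacobiSym D f

/-!
For g < f the form q·R_g is ⟨a f², (2ag + b) f, q(g,1)⟩ and q·R_f is ⟨a, b f, c f²⟩. A prime
p ≠ f dividing all coefficients of either would divide a, b and c, so only f can obstruct
primitivity; it divides all coefficients of q·R_g exactly when f ∣ q(g,1), and never those of
q·R_f since f ∤ a. The non-primitive g are thus the roots of a x² + b x + c in 𝔽_f, and there are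
1 + (D/f) of them: for odd f the substitution y = 2ax + b turns them into the square roots of D,
and for f = 2 it is a parity check.
-/

open Finset

namespace BQF

lemma isPrimitive_iff_forall_prime (q : BQF) :
    q.IsPrimitive ↔
      ∀ p : ℕ, p.Prime → (p : ℤ) ∣ q.a → (p : ℤ) ∣ q.b → ¬ (p : ℤ) ∣ q.c := by
  simp only [IsPrimitive, Nat.eq_one_iff_not_exists_prime_dvd, ← Int.natCast_dvd_natCast,
    Int.dvd_coe_gcd_iff, and_imp, not_and]

lemma act_Rmat_of_ne (q : BQF) {f g : ℤ} (hg : g ≠ f) :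
    q.act (Rmat f g) = ⟨q.a * f ^ 2, (2 * q.a * g + q.b) * f, q.eval g 1⟩ := by
  rw [Rmat, if_neg hg]
  simp only [act, eval, Matrix.of_apply, Matrix.cons_val', Matrix.cons_val_zero,
    Matrix.cons_val_one, Matrix.empty_val', Matrix.cons_val_fin_one, mk.injEq]
  exact ⟨by ring, by ring, trivial⟩

lemma act_Rmat_self (q : BQF) (f : ℤ) : q.act (Rmat f f) = ⟨q.a, q.b * f, q.c * f ^ 2⟩ := by
  rw [Rmat, if_pos rfl]
  simp only [act, eval, Matrix.of_apply, Matrix.cons_val', Matrix.cons_val_zero,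
    Matrix.cons_val_one, Matrix.empty_val', Matrix.cons_val_fin_one, mk.injEq]
  refine ⟨by ring, by ring, by ring⟩

lemma isPrimitive_act_Rmat_of_ne_iff {f : ℕ} (hf : f.Prime) {q : BQF} (hq : q.IsPrimitive)
    {g : ℤ} (hg : g ≠ f) :
    (q.act (Rmat f g)).IsPrimitive ↔ ¬ (f : ℤ) ∣ q.eval g 1 := by
  rw [act_Rmat_of_ne q hg, isPrimitive_iff_forall_prime]
  refine ⟨fun h ↦ h f hf (dvd_mul_of_dvd_right (dvd_pow_self _ two_ne_zero) _)
    (dvd_mul_left _ _), fun h p hp hpa hpb hpc ↦ ?_⟩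
  obtain rfl | hpf := eq_or_ne p f
  · exact h hpc
  have hcop : IsCoprime (p : ℤ) f := Nat.isCoprime_iff_coprime.2 ((Nat.coprime_primes hp hf).2 hpf)
  have ha : (p : ℤ) ∣ q.a := (hcop.pow_right (n := 2)).dvd_of_dvd_mul_right hpa
  have hb : (p : ℤ) ∣ q.b :=
    (dvd_add_right (dvd_mul_of_dvd_left (dvd_mul_of_dvd_right ha 2) g)).1
      (hcop.dvd_of_dvd_mul_right hpb)
  have hc : (p : ℤ) ∣ q.c := by
    rw [eval, mul_one, one_pow, mul_one] at hpc
    exact (dvd_add_right (dvd_add (dvd_mul_of_dvd_left ha _) (dvd_mul_of_dvd_left hb _))).1 hpc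
  exact (isPrimitive_iff_forall_prime q).1 hq p hp ha hb hc

lemma isPrimitive_act_Rmat_self {f : ℕ} (hf : f.Prime) {q : BQF} (hq : q.IsPrimitive)
    (ha : ¬ (f : ℤ) ∣ q.a) : (q.act (Rmat f f)).IsPrimitive := by
  rw [act_Rmat_self, isPrimitive_iff_forall_prime]
  intro p hp hpa hpb hpc
  obtain rfl | hpf := eq_or_ne p f
  · exact ha hpa
  have hcop : IsCoprime (p : ℤ) f := Nat.isCoprime_iff_coprime.2 ((Nat.coprime_primes hp hf).2 hpf)
  exact (isPrimitive_iff_forall_prime q).1 hq p hp hpa (hcop.dvd_of_dvd_mul_right hpb)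
    ((hcop.pow_right (n := 2)).dvd_of_dvd_mul_right hpc)

end BQF

theorem card_quadratic_roots {K : Type*} [Field K] [Fintype K] [DecidableEq K]
    (hK : ringChar K ≠ 2) {a : K} (ha : a ≠ 0) (b c : K) :
    (#{x | a * x ^ 2 + b * x + c = 0} : ℤ) = quadraticChar K (discrim a b c) + 1 := by
  have : NeZero (2 : K) := ⟨Ring.two_ne_zero hK⟩
  rw [← quadraticChar_card_sqrts hK, Set.toFinset_ofPred]
  congr 1
  refine card_equiv ((Equiv.mulLeft₀ (2 * a) (mul_ne_zero two_ne_zero ha)).trans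
    (Equiv.addRight b)) fun x ↦ ?_
  simp [sq, quadratic_eq_zero_iff_discrim_eq_sq ha, eq_comm]

lemma card_filter_Ico_intCast (n : ℕ) [NeZero n] (P : ZMod n → Prop) [DecidablePred P] :
    #{g ∈ Ico (0 : ℤ) n | P ((g : ℤ) : ZMod n)} = #{x : ZMod n | P x} := by
  refine card_nbij' (fun g ↦ (g : ZMod n)) (fun x ↦ (x.val : ℤ)) ?_ ?_ ?_ ?_
  · intro g hg
    simp_all
  · intro x hx
    simp only [coe_filter, mem_univ, true_and, Set.mem_ofPred_eq] at hx
    simp only [coe_filter, mem_Ico, Set.mem_ofPred_eq, Int.cast_natCast, ZMod.natCast_zmod_val]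
    exact ⟨⟨Int.natCast_nonneg _, Int.ofNat_lt.2 (ZMod.val_lt x)⟩, hx⟩
  · intro g hg
    simp only [coe_filter, mem_Ico, Set.mem_ofPred_eq] at hg
    exact (ZMod.val_intCast g).trans (Int.emod_eq_of_lt hg.1.1 hg.1.2)
  · intro x _
    simp

lemma kronSym_two_disc (a b c : ℤ) (ha : Odd a) :
    kronSym (b ^ 2 - 4 * a * c) 2 = if Even b then 0 else if Even c then 1 else -1 := by
  obtain ⟨j, rfl⟩ := ha
  rw [kronSym, if_pos rfl]
  -- for odd b = 2k + 1, b² = 4k(k + 1) + 1 ≡ 1 (mod 8)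
  rcases Int.even_or_odd' b with ⟨k, rfl | rfl⟩ <;> rcases Int.even_or_odd' c with ⟨l, rfl | rfl⟩
  all_goals simp only [Int.even_add_one, even_two_mul, not_true, if_true, if_false]
  all_goals obtain ⟨m, hm⟩ := Int.even_mul_succ_self k
  all_goals ring_nf at hm ⊢
  all_goals omega

lemma card_quadratic_roots_zmod_two (a b c : ℤ) (ha : Odd a) :
    (#{x : ZMod 2 | (a : ZMod 2) * x ^ 2 + b * x + c = 0} : ℤ) =
      kronSym (b ^ 2 - 4 * a * c) 2 + 1 := by
  rw [kronSym_two_disc a b c ha]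
  obtain ⟨j, rfl⟩ := ha
  rcases Int.even_or_odd' b with ⟨k, rfl | rfl⟩ <;> rcases Int.even_or_odd' c with ⟨l, rfl | rfl⟩
  all_goals simp only [Int.even_add_one, even_two_mul, not_true, if_true, if_false]
  all_goals push_cast; reduce_mod_char; decide

lemma card_quadratic_roots_zmod {f : ℕ} [Fact f.Prime] {a : ℤ} (ha : ¬ (f : ℤ) ∣ a) (b c : ℤ) :
    (#{x : ZMod f | (a : ZMod f) * x ^ 2 + b * x + c = 0} : ℤ) =
      kronSym (b ^ 2 - 4 * a * c) f + 1 := by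
  obtain rfl | hf2 := eq_or_ne f 2
  · refine card_quadratic_roots_zmod_two a b c (Int.not_even_iff_odd.1 ?_)
    simpa [even_iff_two_dvd] using ha
  rw [card_quadratic_roots (by rwa [ZMod.ringChar_zmod_n])
      (by rwa [Ne, ZMod.intCast_zmod_eq_zero_iff_dvd]), kronSym, if_neg hf2,
    ← jacobiSym.legendreSym.to_jacobiSym]
  simp [discrim, legendreSym]

open scoped Classical in
theorem stmt17 (f : ℕ) (hf : f.Prime) (q : BQF) (hq : q.IsPrimitive) (D : ℤ)
    (hd : q.disc = D) (ha : Int.gcd q.a f = 1) :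
    (∀ g : ℤ, 0 ≤ g → g ≤ f →
      ((q.act (Rmat f g)).IsPrimitive ↔ (g = f ∨ ¬ (f : ℤ) ∣ q.eval g 1))) ∧
    ((((Finset.Icc (0 : ℤ) f).filter
        (fun g => (q.act (Rmat f g)).IsPrimitive)).card : ℤ) = f - kronSym D f) := by
  have := Fact.mk hf
  have hfa : ¬ (f : ℤ) ∣ q.a := fun h ↦ hf.ne_one <| Nat.isUnit_iff.1 <| Int.ofNat_isUnit.1 <|
    (Int.isCoprime_iff_gcd_eq_one.2 ha).isUnit_of_dvd' h dvd_rfl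
  have hprim (g : ℤ) : (q.act (Rmat f g)).IsPrimitive ↔ g = f ∨ ¬ (f : ℤ) ∣ q.eval g 1 := by
    obtain rfl | hg := eq_or_ne g f
    · simpa using BQF.isPrimitive_act_Rmat_self hf hq hfa
    · simp [hg, BQF.isPrimitive_act_Rmat_of_ne_iff hf hq hg]
  refine ⟨fun g _ _ ↦ hprim g, ?_⟩
  have hroots : (#{g ∈ Ico (0 : ℤ) f | (f : ℤ) ∣ q.eval g 1} : ℤ) = kronSym D f + 1 := by
    rw [← hd, BQF.disc, ← card_quadratic_roots_zmod hfa, ← card_filter_Ico_intCast]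
    congr 2
    exact filter_congr fun g _ ↦ by simp [← ZMod.intCast_zmod_eq_zero_iff_dvd, BQF.eval]
  have hIco : {g ∈ Ico (0 : ℤ) f | (q.act (Rmat f g)).IsPrimitive} =
      {g ∈ Ico (0 : ℤ) f | ¬ (f : ℤ) ∣ q.eval g 1} :=
    filter_congr fun g hg ↦ (hprim g).trans (or_iff_right (mem_Ico.1 hg).2.ne)
  have hsplit := card_filter_add_card_filter_not (s := Ico (0 : ℤ) f) ((f : ℤ) ∣ q.eval · 1)
  rw [Int.card_Ico, sub_zero] at hsplit
  rw [← Ico_insert_right (Int.natCast_nonneg f), filter_insert, if_pos ((hprim f).2 (Or.inl rfl)),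
    card_insert_of_notMem (by simp), hIco]
  push_cast
  omega
end
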